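/- Assume Conjecture 2. Let k be a field of characteristic p and let f, g ∈ ME_n(k) be strong Keller maps (with affine part identity). Then the composition f∘g is a strong Keller map over k. -/

import Mathlib

open MvPolynomial

noncomputable section

/-- The total degree `|α|` of a multi-index `α`. -/
def mdeg {n : ℕ} (α : Fin n →₀ ℕ) : ℕ := α.sum fun _ e => e

/-- The determinant of the Jacobian matrix `(∂F_i/∂x_j)` of a polynomial endomorphism. -/
def jacDet {n : ℕ} {R : Type*} [CommRing R] (F : Fin n → MvPolynomial (Fin n) R) :
    MvPolynomial (Fin n) R :=
  (Matrix.of fun i j => MvPolynomial.pderiv j (F i)).det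

/-- `F` has degree at most `d`. -/
def DegLE {n : ℕ} {R : Type*} [CommRing R] (F : Fin n → MvPolynomial (Fin n) R) (d : ℕ) : Prop :=
  ∀ i, (F i).totalDegree ≤ d

/-- `F` has affine part the identity: `F_i = x_i + (terms of degree ≥ 2)`. -/
def AffinePartId {n : ℕ} {R : Type*} [CommRing R] (F : Fin n → MvPolynomial (Fin n) R) : Prop :=
  ∀ (i : Fin n) (α : Fin n →₀ ℕ), mdeg α ≤ 1 →
    MvPolynomial.coeff α (F i) = MvPolynomial.coeff α (MvPolynomial.X i : MvPolynomial (Fin n) R)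

/-- `F` is an invertible polynomial map: there is `G` with `F∘G = G∘F = id`. -/
def IsInvertible {n : ℕ} {R : Type*} [CommRing R] (F : Fin n → MvPolynomial (Fin n) R) : Prop :=
  ∃ G : Fin n → MvPolynomial (Fin n) R,
    (∀ i, MvPolynomial.bind₁ G (F i) = MvPolynomial.X i) ∧
    (∀ i, MvPolynomial.bind₁ F (G i) = MvPolynomial.X i)

/-- Index type of the universal coefficients `c_{i,α}`, `1 ≤ i ≤ n`, `2 ≤ |α| ≤ d`. -/
abbrev Idx (n d : ℕ) : Type := Fin n × {α : Fin n →₀ ℕ // 2 ≤ mdeg α ∧ mdeg α ≤ d}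

/-- The finite set of multi-indices `α` with `2 ≤ |α| ≤ d`. -/
def midxSet (n d : ℕ) : Finset (Fin n →₀ ℕ) :=
  (Finset.Iic (Finsupp.equivFunOnFinite.symm fun _ : Fin n => d)).filter
    fun α => 2 ≤ mdeg α ∧ mdeg α ≤ d

/-- The universal degree-`d` endomorphism with affine part identity, written over
`C_{ℤ,d} = ℤ[c_{i,α}]`. -/
def univFZ (n d : ℕ) : Fin n → MvPolynomial (Fin n) (MvPolynomial (Idx n d) ℤ) :=
  fun i => MvPolynomial.X i +
    ∑ α ∈ (midxSet n d).attach,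
      MvPolynomial.monomial (α : Fin n →₀ ℕ)
        (MvPolynomial.X (⟨i, ⟨α.1, by
          have h := α.2
          simp only [midxSet, Finset.mem_filter] at h
          exact h.2⟩⟩ : Idx n d))

/-- The coefficients `E_β ∈ C_{ℤ,d}` of `det(Jac(F[d])) − 1 = Σ_β E_β x^β`. -/
def Ecoef (n d : ℕ) (β : Fin n →₀ ℕ) : MvPolynomial (Idx n d) ℤ :=
  MvPolynomial.coeff β (jacDet (univFZ n d) - 1)

/-- The inclusion `C_{ℤ,d} → C_{ℚ,d}`. -/
def toQ (n d : ℕ) : MvPolynomial (Idx n d) ℤ →+* MvPolynomial (Idx n d) ℚ :=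
  MvPolynomial.map (Int.castRingHom ℚ)

/-- The ideal `I_ℚ^d ⊆ C_{ℚ,d}` generated by the coefficients `E_β`. -/
def Iqd (n d : ℕ) : Ideal (MvPolynomial (Idx n d) ℚ) :=
  Ideal.span (Set.range fun β : Fin n →₀ ℕ => toQ n d (Ecoef n d β))

/-- `J_ℤ^d := rad(I_ℚ^d) ∩ C_{ℤ,d}` as the contraction of the radical to `C_{ℤ,d}`. -/
def Jzd (n d : ℕ) : Ideal (MvPolynomial (Idx n d) ℤ) :=
  Ideal.comap (toQ n d) (Iqd n d).radical

/-- `ψ_F : C_{ℤ,d} → R`, evaluating `c_{i,α}` at the coefficient of `x^α` in `F_i`. -/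
def psi {n : ℕ} (d : ℕ) {R : Type*} [CommRing R] (F : Fin n → MvPolynomial (Fin n) R) :
    MvPolynomial (Idx n d) ℤ →+* R :=
  MvPolynomial.eval₂Hom (Int.castRingHom R) fun v => MvPolynomial.coeff v.2.1 (F v.1)

/-- `F` is a strong Keller map (w.r.t. degree bound `d`): `ψ_F` vanishes on `J_ℤ^d`. -/
def IsSKE (n d : ℕ) {R : Type*} [CommRing R] (F : Fin n → MvPolynomial (Fin n) R) : Prop :=
  ∀ Q ∈ Jzd n d, psi d F Q = 0

/-- `F` is a strong Keller map: for some degree bound `d ≥ 2` of `F`,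
`ψ_F` vanishes on `J_ℤ^d`. -/
def IsSKEAll (n : ℕ) {R : Type*} [CommRing R] (F : Fin n → MvPolynomial (Fin n) R) : Prop :=
  ∃ d, 2 ≤ d ∧ DegLE F d ∧ IsSKE n d F


/-- **Conjecture 1(1).** For every ℤ-algebra `R`, field `k` and surjective `τ : R → k`,
every invertible polynomial map over `k` with Jacobian determinant 1 lifts along `π` to an
invertible polynomial map over `R` with Jacobian determinant 1. -/
def Conj1_1 : Prop :=
  ∀ (n : ℕ), 1 ≤ n →
  ∀ (R : Type) [CommRing R], ∀ (k : Type) [Field k],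
  ∀ (τ : R →+* k), Function.Surjective τ →
  ∀ f : Fin n → MvPolynomial (Fin n) k, IsInvertible f → jacDet f = 1 →
    ∃ F : Fin n → MvPolynomial (Fin n) R, IsInvertible F ∧ jacDet F = 1 ∧
      ∀ i, MvPolynomial.map τ (F i) = f i

/-- **Conjecture 1(2).** For every ℤ-algebra `R`, field `k` and surjective `τ : R → k`,
every Keller map `F` over `R` whose image `π(F)` is invertible over `k` with Jacobian
determinant 1 is itself invertible over `R`. -/
def Conj1_2 : Prop :=
  ∀ (n : ℕ), 1 ≤ n →
  ∀ (R : Type) [CommRing R], ∀ (k : Type) [Field k],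
  ∀ (τ : R →+* k), Function.Surjective τ →
  ∀ F : Fin n → MvPolynomial (Fin n) R, jacDet F = 1 →
    IsInvertible (fun i => MvPolynomial.map τ (F i)) →
    jacDet (fun i => MvPolynomial.map τ (F i)) = 1 →
    IsInvertible F

/-- **Conjecture 2.** For every ℤ-algebra `R`, field `k` of characteristic `p`, and
surjective `τ : R → k`, every strong Keller map over `k` with affine part identity is the
image under `π` of a polynomial map over `R` with affine part identity and Jacobian
determinant 1. -/
def Conj2 : Prop :=
  ∀ (n : ℕ), 1 ≤ n →
  ∀ (R : Type) [CommRing R], ∀ (k : Type) [Field k], ∀ (p : ℕ), p.Prime → CharP k p →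
  ∀ (τ : R →+* k), Function.Surjective τ →
  ∀ f : Fin n → MvPolynomial (Fin n) k, AffinePartId f → IsSKEAll n f →
    ∃ F : Fin n → MvPolynomial (Fin n) R, AffinePartId F ∧ jacDet F = 1 ∧
      ∀ i, MvPolynomial.map τ (F i) = f i

/-! ### Auxiliary lemmas -/

section Aux

variable {n : ℕ} {R : Type*} [CommRing R]

theorem mdeg_add {α β : Fin n →₀ ℕ} : mdeg (α + β) = mdeg α + mdeg β := by
  simp [mdeg, Finsupp.sum_add_index]

theorem mdeg_single (j : Fin n) : mdeg (Finsupp.single j 1) = 1 := by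
  simp [mdeg, Finsupp.sum_single_index]

theorem apply_le_mdeg (α : Fin n →₀ ℕ) (j : Fin n) : α j ≤ mdeg α := by
  by_cases h : j ∈ α.support
  · exact Finset.single_le_sum (f := fun i => α i) (fun _ _ => Nat.zero_le _) h
  · simp [Finsupp.notMem_support_iff.mp h]

theorem mdeg_eq_zero {α : Fin n →₀ ℕ} (h : mdeg α = 0) : α = 0 := by
  ext j
  exact Nat.le_zero.mp (h ▸ apply_le_mdeg α j)

/-- If all coefficients of `P` in degrees `≤ m` vanish, so do those of `P * Q`. -/
theorem lv_mul_left {m : ℕ} {P Q : MvPolynomial (Fin n) R}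
    (hP : ∀ u : Fin n →₀ ℕ, mdeg u ≤ m → MvPolynomial.coeff u P = 0)
    (β : Fin n →₀ ℕ) (hβ : mdeg β ≤ m) : MvPolynomial.coeff β (P * Q) = 0 := by
  classical
  rw [MvPolynomial.coeff_mul]
  refine Finset.sum_eq_zero fun x hx => ?_
  rw [Finset.HasAntidiagonal.mem_antidiagonal] at hx
  have hu : mdeg x.1 ≤ m := by
    have h := mdeg_add (α := x.1) (β := x.2)
    rw [hx] at h
    omega
  rw [hP x.1 hu, zero_mul]

/-- Product of two polynomials with zero constant term has vanishing coefficients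
in degrees `≤ 1`. -/
theorem lv_mul_of_cv {P Q : MvPolynomial (Fin n) R}
    (hP : MvPolynomial.coeff 0 P = 0) (hQ : MvPolynomial.coeff 0 Q = 0)
    (β : Fin n →₀ ℕ) (hβ : mdeg β ≤ 1) : MvPolynomial.coeff β (P * Q) = 0 := by
  classical
  rw [MvPolynomial.coeff_mul]
  refine Finset.sum_eq_zero fun x hx => ?_
  rw [Finset.HasAntidiagonal.mem_antidiagonal] at hx
  have hadd : mdeg x.1 + mdeg x.2 ≤ 1 := by rw [← mdeg_add, hx]; exact hβ
  rcases Nat.eq_zero_or_pos (mdeg x.1) with h1 | h1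
  · rw [mdeg_eq_zero h1, hP, zero_mul]
  · have h2 : mdeg x.2 = 0 := by omega
    rw [mdeg_eq_zero h2, hQ, mul_zero]

theorem prodpow_add {G : Fin n → MvPolynomial (Fin n) R} (β γ : Fin n →₀ ℕ) :
    (∏ l, G l ^ (β + γ) l) = (∏ l, G l ^ β l) * ∏ l, G l ^ γ l := by
  rw [← Finset.prod_mul_distrib]
  exact Finset.prod_congr rfl fun l _ => by rw [Finsupp.add_apply, pow_add]

theorem prodpow_single {G : Fin n → MvPolynomial (Fin n) R} (j : Fin n) :
    (∏ l, G l ^ (Finsupp.single j 1 : Fin n →₀ ℕ) l) = G j := by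
  classical
  rw [Finset.prod_eq_single j]
  · simp
  · intro b _ hb
    rw [Finsupp.single_apply, if_neg (fun h => hb h.symm), pow_zero]
  · simp

theorem exists_decomp {α : Fin n →₀ ℕ} (h : 1 ≤ mdeg α) :
    ∃ j : Fin n, ∃ γ : Fin n →₀ ℕ, α = Finsupp.single j 1 + γ ∧ mdeg γ + 1 = mdeg α := by
  have hne : α ≠ 0 := fun h0 => by simp [h0, mdeg] at h
  obtain ⟨j, hj⟩ := Finsupp.support_nonempty_iff.mpr hne
  have hj1 : 1 ≤ α j := Nat.one_le_iff_ne_zero.mpr (Finsupp.mem_support_iff.mp hj)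
  have hle : Finsupp.single j 1 ≤ α := by
    rw [Finsupp.single_le_iff]; exact hj1
  refine ⟨j, α - Finsupp.single j 1, (add_tsub_cancel_of_le hle).symm, ?_⟩
  have := mdeg_add (α := Finsupp.single j 1) (β := α - Finsupp.single j 1)
  rw [add_tsub_cancel_of_le hle] at this
  rw [mdeg_single] at this
  omega

theorem lv_prodpow {G : Fin n → MvPolynomial (Fin n) R}
    (hG : ∀ j, MvPolynomial.coeff 0 (G j) = 0) {α : Fin n →₀ ℕ} (hα : 2 ≤ mdeg α)
    (β : Fin n →₀ ℕ) (hβ : mdeg β ≤ 1) : MvPolynomial.coeff β (∏ l, G l ^ α l) = 0 := by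
  obtain ⟨j, γ, hαγ, hm⟩ := exists_decomp (le_trans (by norm_num) hα)
  obtain ⟨j', γ', hγ, hm'⟩ := exists_decomp (α := γ) (by omega)
  rw [hαγ, prodpow_add, prodpow_single, hγ, prodpow_add, prodpow_single]
  refine lv_mul_of_cv (hG j) ?_ β hβ
  classical
  rw [MvPolynomial.coeff_mul]
  refine Finset.sum_eq_zero fun x hx => ?_
  rw [Finset.HasAntidiagonal.mem_antidiagonal] at hx
  have : x.1 = 0 := by
    have h1 : mdeg x.1 + mdeg x.2 = 0 := by rw [← mdeg_add, hx]; simp [mdeg]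
    exact mdeg_eq_zero (by omega)
  rw [this, hG j', zero_mul]

/-- `bind₁` preserves "all coefficients in degrees ≤ 1 vanish" when the `G j`
have zero constant term. -/
theorem lv_bind₁ {G : Fin n → MvPolynomial (Fin n) R}
    (hG : ∀ j, MvPolynomial.coeff 0 (G j) = 0) {P : MvPolynomial (Fin n) R}
    (hP : ∀ u : Fin n →₀ ℕ, mdeg u ≤ 1 → MvPolynomial.coeff u P = 0)
    (β : Fin n →₀ ℕ) (hβ : mdeg β ≤ 1) :
    MvPolynomial.coeff β (MvPolynomial.bind₁ G P) = 0 := by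
  classical
  conv_lhs => rw [P.as_sum]
  rw [map_sum, MvPolynomial.coeff_sum]
  refine Finset.sum_eq_zero fun α hα => ?_
  have h2 : 2 ≤ mdeg α := by
    by_contra hlt
    exact MvPolynomial.mem_support_iff.mp hα (hP α (by omega))
  rw [MvPolynomial.bind₁_monomial, MvPolynomial.coeff_C_mul]
  have : (∏ i ∈ α.support, G i ^ α i) = ∏ i, G i ^ α i := by
    refine Finset.prod_subset (Finset.subset_univ α.support) fun x _ hx => ?_
    rw [Finsupp.notMem_support_iff.mp hx, pow_zero]
  rw [this, lv_prodpow hG h2 β hβ, mul_zero]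

theorem affinePartId_comp {F G : Fin n → MvPolynomial (Fin n) R}
    (hF : AffinePartId F) (hG : AffinePartId G) :
    AffinePartId fun i => MvPolynomial.bind₁ G (F i) := by
  have hGc : ∀ j, MvPolynomial.coeff 0 (G j) = 0 := fun j => by
    have := hG j 0 (by simp [mdeg])
    simpa using this
  intro i β hβ
  show MvPolynomial.coeff β (MvPolynomial.bind₁ G (F i)) = _
  have hFi : F i = MvPolynomial.X i + (F i - MvPolynomial.X i) := by ring
  rw [hFi, map_add, MvPolynomial.bind₁_X_right, MvPolynomial.coeff_add]
  have hlv : ∀ u : Fin n →₀ ℕ, mdeg u ≤ 1 →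
      MvPolynomial.coeff u (F i - MvPolynomial.X i) = 0 := fun u hu => by
    rw [MvPolynomial.coeff_sub, hF i u hu, sub_self]
  rw [lv_bind₁ hGc hlv β hβ, add_zero]
  exact hG i β hβ

end Aux

section Aux2

variable {n : ℕ} {R : Type*} [CommRing R]

theorem pderiv_bind₁' (G : Fin n → MvPolynomial (Fin n) R) (j : Fin n)
    (P : MvPolynomial (Fin n) R) :
    MvPolynomial.pderiv j (MvPolynomial.bind₁ G P) =
      ∑ l, MvPolynomial.bind₁ G (MvPolynomial.pderiv l P) * MvPolynomial.pderiv j (G l) := by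
  induction P using MvPolynomial.induction_on with
  | C a => simp
  | add p q hp hq =>
    simp only [map_add, hp, hq, ← Finset.sum_add_distrib, add_mul]
  | mul_X p i hp =>
    classical
    rw [map_mul, MvPolynomial.bind₁_X_right, MvPolynomial.pderiv_mul, hp]
    have hkey : ∀ l, (MvPolynomial.bind₁ G) ((MvPolynomial.pderiv l) (p * MvPolynomial.X i)) =
        (MvPolynomial.bind₁ G) ((MvPolynomial.pderiv l) p) * G i
          + (if l = i then (MvPolynomial.bind₁ G) p else 0) := by
      intro l
      rw [MvPolynomial.pderiv_mul, map_add, map_mul, MvPolynomial.bind₁_X_right]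
      congr 1
      by_cases h : l = i
      · subst h; simp [MvPolynomial.pderiv_X_self]
      · simp [MvPolynomial.pderiv_X_of_ne (Ne.symm h), h]
    simp only [hkey, add_mul, Finset.sum_add_distrib, ite_mul, zero_mul,
      Finset.sum_ite_eq', Finset.mem_univ, if_true]
    rw [Finset.sum_mul]
    congr 1
    exact Finset.sum_congr rfl fun l _ => by ring

theorem jacDet_comp (F G : Fin n → MvPolynomial (Fin n) R) :
    jacDet (fun i => MvPolynomial.bind₁ G (F i)) =
      MvPolynomial.bind₁ G (jacDet F) * jacDet G := by
  have hM : (Matrix.of fun i j => MvPolynomial.pderiv j (MvPolynomial.bind₁ G (F i))) =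
      (Matrix.of fun i l => MvPolynomial.bind₁ G (MvPolynomial.pderiv l (F i))) *
        (Matrix.of fun l j => MvPolynomial.pderiv j (G l)) := by
    ext i j
    simp [Matrix.mul_apply, pderiv_bind₁']
  show (Matrix.of fun i j => MvPolynomial.pderiv j (MvPolynomial.bind₁ G (F i))).det = _
  rw [hM, Matrix.det_mul]
  congr 1
  exact (AlgHom.map_det (MvPolynomial.bind₁ G)
    (Matrix.of fun i j => MvPolynomial.pderiv j (F i))).symm

theorem jacDet_map {S : Type*} [CommRing S] (φ : R →+* S) (F : Fin n → MvPolynomial (Fin n) R) :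
    jacDet (fun i => MvPolynomial.map φ (F i)) = MvPolynomial.map φ (jacDet F) := by
  show _ = (MvPolynomial.map φ) ((Matrix.of fun i j => MvPolynomial.pderiv j (F i)).det)
  rw [RingHom.map_det]
  unfold jacDet
  congr 1
  ext i j
  simp [Matrix.map_apply, MvPolynomial.pderiv_map]

theorem mem_midxSet {d : ℕ} {α : Fin n →₀ ℕ} :
    α ∈ midxSet n d ↔ 2 ≤ mdeg α ∧ mdeg α ≤ d := by
  unfold midxSet
  rw [Finset.mem_filter, Finset.mem_Iic]
  constructor
  · exact fun h => h.2
  · intro h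
    refine ⟨?_, h⟩
    intro j
    exact le_trans (apply_le_mdeg α j) h.2

theorem coeff_univFZ (d : ℕ) (i : Fin n) (α : Fin n →₀ ℕ) :
    MvPolynomial.coeff α (univFZ n d i) =
      if hα : α ∈ midxSet n d then
        MvPolynomial.X (⟨i, ⟨α, mem_midxSet.mp hα⟩⟩ : Idx n d)
      else MvPolynomial.coeff α (MvPolynomial.X i : MvPolynomial (Fin n) (MvPolynomial (Idx n d) ℤ)) := by
  classical
  unfold univFZ
  rw [MvPolynomial.coeff_add, MvPolynomial.coeff_sum]
  by_cases hα : α ∈ midxSet n d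
  · rw [dif_pos hα]
    have hXi : MvPolynomial.coeff α (MvPolynomial.X i :
        MvPolynomial (Fin n) (MvPolynomial (Idx n d) ℤ)) = 0 := by
      rw [MvPolynomial.coeff_X']
      rw [if_neg]
      intro h
      have := mem_midxSet.mp hα
      rw [← h, mdeg_single] at this
      omega
    rw [hXi, zero_add]
    rw [Finset.sum_eq_single (⟨α, hα⟩ : {x // x ∈ midxSet n d})]
    · rw [MvPolynomial.coeff_monomial, if_pos rfl]
    · intro b _ hb
      rw [MvPolynomial.coeff_monomial, if_neg]
      intro h
      exact hb (Subtype.ext h)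
    · intro h
      exact absurd (Finset.mem_attach _ _) h
  · rw [dif_neg hα]
    have : ∀ b ∈ (midxSet n d).attach,
        MvPolynomial.coeff α (MvPolynomial.monomial (b : Fin n →₀ ℕ)
          (MvPolynomial.X (⟨i, ⟨b.1, (mem_midxSet.mp b.2)⟩⟩ : Idx n d) :
            MvPolynomial (Idx n d) ℤ)) = 0 := by
      intro b _
      rw [MvPolynomial.coeff_monomial, if_neg]
      intro h
      exact hα (h ▸ b.2)
    rw [Finset.sum_congr rfl this, Finset.sum_const_zero, add_zero]

end Aux2

section Aux3

variable {n : ℕ} {R : Type*} [CommRing R]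

theorem map_psi_univFZ {d : ℕ} {H : Fin n → MvPolynomial (Fin n) R}
    (hA : AffinePartId H) (hD : DegLE H d) (i : Fin n) :
    MvPolynomial.map (psi d H : MvPolynomial (Idx n d) ℤ →+* R) (univFZ n d i) = H i := by
  classical
  ext α
  rw [MvPolynomial.coeff_map, coeff_univFZ]
  by_cases hα : α ∈ midxSet n d
  · rw [dif_pos hα]
    rw [psi, MvPolynomial.eval₂Hom_X']
  · rw [dif_neg hα]
    by_cases h1 : mdeg α ≤ 1
    · rw [hA i α h1]
      rw [MvPolynomial.coeff_X', MvPolynomial.coeff_X']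
      by_cases h : Finsupp.single i 1 = α
      · rw [if_pos h, if_pos h, map_one]
      · rw [if_neg h, if_neg h, map_zero]
    · have h2 : 2 ≤ mdeg α := by omega
      have hgt : d < mdeg α := by
        rw [mem_midxSet, not_and_or] at hα
        rcases hα with hα | hα
        · omega
        · omega
      have hz : MvPolynomial.coeff α (H i) = 0 := by
        apply MvPolynomial.coeff_eq_zero_of_totalDegree_lt
        calc (H i).totalDegree ≤ d := hD i
        _ < mdeg α := hgt
      have hXz : MvPolynomial.coeff α (MvPolynomial.X i :
          MvPolynomial (Fin n) (MvPolynomial (Idx n d) ℤ)) = 0 := by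
        rw [MvPolynomial.coeff_X', if_neg]
        intro h
        rw [← h, mdeg_single] at h2
        omega
      rw [hXz, map_zero, hz]

theorem psi_Ecoef_eq_zero {d : ℕ} {H : Fin n → MvPolynomial (Fin n) R}
    (hA : AffinePartId H) (hD : DegLE H d) (hJ : jacDet H = 1) (β : Fin n →₀ ℕ) :
    psi d H (Ecoef n d β) = 0 := by
  have h1 : (fun i => MvPolynomial.map (psi d H : MvPolynomial (Idx n d) ℤ →+* R)
      (univFZ n d i)) = H := funext (map_psi_univFZ hA hD)
  rw [Ecoef, ← MvPolynomial.coeff_map]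
  rw [map_sub, map_one, ← jacDet_map (psi d H : MvPolynomial (Idx n d) ℤ →+* R) (univFZ n d),
    h1, hJ, sub_self, MvPolynomial.coeff_zero]

theorem psi_map_eq {d : ℕ} {S : Type*} [CommRing S] (τ : R →+* S)
    (H : Fin n → MvPolynomial (Fin n) R) :
    (psi d fun i => MvPolynomial.map τ (H i)) = τ.comp (psi d H) := by
  apply MvPolynomial.ringHom_ext
  · intro r
    rw [RingHom.comp_apply]
    rw [psi, psi, MvPolynomial.eval₂Hom_C, MvPolynomial.eval₂Hom_C]
    simp
  · intro v
    rw [RingHom.comp_apply]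
    rw [psi, psi, MvPolynomial.eval₂Hom_X', MvPolynomial.eval₂Hom_X']
    rw [MvPolynomial.coeff_map]

/-- The key positivity-free step: over `R = ℤ[k]`, a Keller map with affine part identity
is a strong Keller map. -/
theorem isSKE_of_keller {k : Type} [Field k] {d : ℕ}
    {H : Fin n → MvPolynomial (Fin n) (MvPolynomial k ℤ)}
    (hA : AffinePartId H) (hD : DegLE H d) (hJ : jacDet H = 1) :
    IsSKE n d H := by
  intro Q hQ
  -- the extension to ℚ coefficients
  set ι : MvPolynomial k ℤ →+* MvPolynomial k ℚ :=
    MvPolynomial.map (Int.castRingHom ℚ) with hι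
  have hιinj : Function.Injective ι :=
    MvPolynomial.map_injective _ Int.cast_injective
  set Ψ : MvPolynomial (Idx n d) ℚ →+* MvPolynomial k ℚ :=
    MvPolynomial.eval₂Hom (MvPolynomial.C : ℚ →+* MvPolynomial k ℚ)
      (fun v => ι (MvPolynomial.coeff v.2.1 (H v.1))) with hΨ
  have hcomp : Ψ.comp (toQ n d) = ι.comp (psi d H) := by
    apply MvPolynomial.ringHom_ext
    · intro r
      simp [hΨ, toQ, psi, hι]
    · intro v
      simp [hΨ, toQ, psi]
  have hker : Iqd n d ≤ RingHom.ker Ψ := by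
    rw [Iqd, Ideal.span_le]
    rintro x ⟨β, rfl⟩
    have hx : Ψ (toQ n d (Ecoef n d β)) = ι (psi d H (Ecoef n d β)) :=
      RingHom.congr_fun hcomp _
    simp only [SetLike.mem_coe, RingHom.mem_ker]
    show Ψ (toQ n d (Ecoef n d β)) = 0
    rw [hx, psi_Ecoef_eq_zero hA hD hJ, map_zero]
  obtain ⟨m, hm⟩ := (Ideal.mem_radical_iff.mp hQ : ∃ m : ℕ, (toQ n d Q) ^ m ∈ Iqd n d)
  have hpow : (Ψ (toQ n d Q)) ^ m = 0 := by
    rw [← map_pow]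
    exact RingHom.mem_ker.mp (hker hm)
  have hzero : Ψ (toQ n d Q) = 0 := by
    rcases Nat.eq_zero_or_pos m with h0 | h0
    · subst h0
      rw [pow_zero] at hpow
      exact absurd hpow one_ne_zero
    · exact pow_eq_zero_iff (Nat.pos_iff_ne_zero.mp h0) |>.mp hpow
  have hfin : ι (psi d H Q) = 0 := by
    have h := RingHom.congr_fun hcomp Q
    rw [RingHom.comp_apply, RingHom.comp_apply] at h
    rw [← h]
    exact hzero
  exact hιinj (by rw [hfin, map_zero])

end Aux3

theorem totalDegree_map_le' {n : ℕ} {R S : Type*} [CommRing R] [CommRing S]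
    (τ : R →+* S) (P : MvPolynomial (Fin n) R) :
    (MvPolynomial.map τ P).totalDegree ≤ P.totalDegree := by
  refine Finset.sup_le fun s hs => MvPolynomial.le_totalDegree ?_
  rw [MvPolynomial.mem_support_iff] at hs ⊢
  intro h0
  exact hs (by rw [MvPolynomial.coeff_map, h0, map_zero])

/-- Assuming Conjecture 2: over a field `k` of characteristic `p`, the
composition of two strong Keller maps (with affine part identity) is a strong Keller map. -/
theorem strong_keller_closed_under_composition (h2 : Conj2) (n p : ℕ)
    (hn : 1 ≤ n) (hp : p.Prime) (k : Type) [Field k] [CharP k p]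
    (f g : Fin n → MvPolynomial (Fin n) k)
    (haf : AffinePartId f) (hag : AffinePartId g)
    (hf : IsSKEAll n f) (hg : IsSKEAll n g) :
    IsSKEAll n (fun i => MvPolynomial.bind₁ g (f i)) := by
  classical
  let τ : MvPolynomial k ℤ →+* k := MvPolynomial.eval₂Hom (Int.castRingHom k) id
  have hτ : Function.Surjective τ := fun a => ⟨MvPolynomial.X a, by simp [τ]⟩
  obtain ⟨F, hFaff, hFjac, hFπ⟩ :=
    h2 n hn (MvPolynomial k ℤ) k p hp inferInstance τ hτ f haf hf
  obtain ⟨G, hGaff, hGjac, hGπ⟩ :=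
    h2 n hn (MvPolynomial k ℤ) k p hp inferInstance τ hτ g hag hg
  set H : Fin n → MvPolynomial (Fin n) (MvPolynomial k ℤ) :=
    fun i => MvPolynomial.bind₁ G (F i) with hH
  have hπ : ∀ i, MvPolynomial.map τ (H i) = MvPolynomial.bind₁ g (f i) := by
    intro i
    rw [hH]
    show MvPolynomial.map τ (MvPolynomial.bind₁ G (F i)) = _
    rw [MvPolynomial.map_bind₁, hFπ i]
    have hg' : (fun j => MvPolynomial.map τ (G j)) = g := funext hGπ
    rw [hg']
  have hjac : jacDet H = 1 := by
    calc jacDet H = MvPolynomial.bind₁ G (jacDet F) * jacDet G := jacDet_comp F G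
    _ = 1 := by rw [hFjac, hGjac, map_one, one_mul]
  have haff : AffinePartId H := affinePartId_comp hFaff hGaff
  set d : ℕ := max 2 (Finset.univ.sup fun i => (H i).totalDegree) with hd
  have hD : DegLE H d := by
    intro i
    exact le_trans (Finset.le_sup (f := fun i => (H i).totalDegree) (Finset.mem_univ i))
      (le_max_right _ _)
  refine ⟨d, le_max_left _ _, ?_, ?_⟩
  · intro i
    show (MvPolynomial.bind₁ g (f i)).totalDegree ≤ d
    rw [← hπ i]
    exact le_trans (totalDegree_map_le' τ (H i)) (hD i)
  · intro Q hQ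
    have hske := isSKE_of_keller haff hD hjac Q hQ
    have hval := RingHom.congr_fun (psi_map_eq (d := d) τ H) Q
    have hfun : (fun i => MvPolynomial.map τ (H i)) =
        fun i => MvPolynomial.bind₁ g (f i) := funext hπ
    rw [hfun] at hval
    rw [hval, RingHom.comp_apply, hske, map_zero]

end
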